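/- Let C be a triangulated category equipped with a weight structure w and a t-structure t adjacent to w (i.e. C^{t≤0} = C_{w≥0}), and let m ≤ n be integers. Then: (a) for every object M of C there exists a distinguished triangle P →g M →h I_0 → P[1] such that I_0 ∈ C[m,n] and P is without weights m,…,n; moreover, for any such triangle, (b) a morphism j with target M kills weights m,…,n if and only if j factors through g, and (c) every morphism from M to an object of C[m,n] factors through h. -/

import Mathlib

open CategoryTheory CategoryTheory.Limits CategoryTheory.Pretriangulated ZeroObject

universe v u

variable (C : Type u) [Category.{v} C] [HasZeroObject C] [Preadditive C] [HasShift C ℤ]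
  [∀ n : ℤ, (shiftFunctor C n).Additive] [Pretriangulated C]

/-- A weight structure on a triangulated category `C`: a pair of retract-closed classes
`le = C_{w≤0}` and `ge = C_{w≥0}` satisfying semi-invariance with respect to translations,
orthogonality, and the existence of weight decompositions. -/
structure WeightStructure where
  /-- the class `C_{w≤0}` -/
  le : Set C
  /-- the class `C_{w≥0}` -/
  ge : Set C
  /-- `C_{w≤0}` is closed under retracts -/
  le_retract : ∀ ⦃X Y : C⦄ (i : X ⟶ Y) (r : Y ⟶ X), i ≫ r = 𝟙 X → le Y → le X
  /-- `C_{w≥0}` is closed under retracts -/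
  ge_retract : ∀ ⦃X Y : C⦄ (i : X ⟶ Y) (r : Y ⟶ X), i ≫ r = 𝟙 X → ge Y → ge X
  /-- `C_{w≤0} ⊆ C_{w≤0}[1]`, i.e. `X ∈ C_{w≤0} → X[-1] ∈ C_{w≤0}` -/
  le_shift : ∀ ⦃X : C⦄, le X → le ((shiftFunctor C (-1 : ℤ)).obj X)
  /-- `C_{w≥0}[1] ⊆ C_{w≥0}`, i.e. `X ∈ C_{w≥0} → X[1] ∈ C_{w≥0}` -/
  ge_shift : ∀ ⦃X : C⦄, ge X → ge ((shiftFunctor C (1 : ℤ)).obj X)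
  /-- orthogonality: `Hom(X, Y[1]) = 0` for `X ∈ C_{w≤0}`, `Y ∈ C_{w≥0}` -/
  orth : ∀ ⦃X Y : C⦄, le X → ge Y → ∀ f : X ⟶ (shiftFunctor C (1 : ℤ)).obj Y, f = 0
  /-- existence of weight decompositions -/
  decomp : ∀ M : C, ∃ (X Y : C) (f : X ⟶ M) (g : M ⟶ Y)
      (h : Y ⟶ (shiftFunctor C (1 : ℤ)).obj X),
      Triangle.mk f g h ∈ (distTriang C) ∧ le X ∧ ge ((shiftFunctor C (-1 : ℤ)).obj Y)

variable {C}

namespace WeightStructure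

/-- `X ∈ C_{w≤i} = C_{w≤0}[i]`, i.e. `X[-i] ∈ C_{w≤0}`. -/
def leDeg (w : WeightStructure C) (i : ℤ) (X : C) : Prop :=
  w.le ((shiftFunctor C (-i)).obj X)

/-- `X ∈ C_{w≥i} = C_{w≥0}[i]`, i.e. `X[-i] ∈ C_{w≥0}`. -/
def geDeg (w : WeightStructure C) (i : ℤ) (X : C) : Prop :=
  w.ge ((shiftFunctor C (-i)).obj X)

/-- The triangle `A → M → B → A[1]` is an `m`-weight decomposition of `M`:
it is distinguished, `A ∈ C_{w≤m}` and `B ∈ C_{w≥m+1}`. -/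
def IsWeightDecomp (w : WeightStructure C) (m : ℤ) {A M B : C}
    (f : A ⟶ M) (g : M ⟶ B) (h : B ⟶ (shiftFunctor C (1 : ℤ)).obj A) : Prop :=
  Triangle.mk f g h ∈ (distTriang C) ∧ w.leDeg m A ∧ w.geDeg (m + 1) B

/-- `g : M ⟶ N` kills weights `m,…,n`: there exist an `n`-weight decomposition of `M` and an
`(m-1)`-weight decomposition of `N` such that the composite `w_{≤n}M → M → N → w_{≥m}N` is `0`. -/
def KillsWeights (w : WeightStructure C) (m n : ℤ) {M N : C} (g : M ⟶ N) : Prop :=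
  ∃ (A B A' B' : C) (f : A ⟶ M) (p : M ⟶ B) (δ : B ⟶ (shiftFunctor C (1 : ℤ)).obj A)
    (f' : A' ⟶ N) (p' : N ⟶ B') (δ' : B' ⟶ (shiftFunctor C (1 : ℤ)).obj A'),
    w.IsWeightDecomp n f p δ ∧ w.IsWeightDecomp (m - 1) f' p' δ' ∧ f ≫ g ≫ p' = 0

/-- `M` is without weights `m,…,n` if `𝟙 M` kills weights `m,…,n`. -/
def WithoutWeights (w : WeightStructure C) (m n : ℤ) (M : C) : Prop :=
  w.KillsWeights m n (𝟙 M)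

end WeightStructure

variable (C) in
/-- A `t`-structure on `C`: a pair of isomorphism-closed classes `le = C^{t≤0}` and
`ge = C^{t≥0}` with `C^{t≤0}[1] ⊆ C^{t≤0}`, `C^{t≥0} ⊆ C^{t≥0}[1]`, `Hom(X, Y) = 0` for
`X ∈ C^{t≤0}[1]`, `Y ∈ C^{t≥0}`, and `t`-decompositions `A → M → B → A[1]` with
`A ∈ C^{t≤0}`, `B ∈ C^{t≥0}[-1]`. -/
structure TStructure where
  /-- the class `C^{t≤0}` -/
  le : Set C
  /-- the class `C^{t≥0}` -/
  ge : Set C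
  le_iso : ∀ ⦃X Y : C⦄, (X ≅ Y) → le X → le Y
  ge_iso : ∀ ⦃X Y : C⦄, (X ≅ Y) → ge X → ge Y
  /-- `C^{t≤0}[1] ⊆ C^{t≤0}` -/
  le_shift : ∀ ⦃X : C⦄, le X → le ((shiftFunctor C (1 : ℤ)).obj X)
  /-- `C^{t≥0} ⊆ C^{t≥0}[1]` -/
  ge_shift : ∀ ⦃X : C⦄, ge X → ge ((shiftFunctor C (-1 : ℤ)).obj X)
  /-- `Hom(X, Y) = 0` for `X ∈ C^{t≤0}[1]` and `Y ∈ C^{t≥0}` -/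
  orth : ∀ ⦃X Y : C⦄, le X → ge Y → ∀ f : (shiftFunctor C (1 : ℤ)).obj X ⟶ Y, f = 0
  /-- existence of `t`-decompositions -/
  decomp : ∀ M : C, ∃ (A B : C) (f : A ⟶ M) (g : M ⟶ B)
      (h : B ⟶ (shiftFunctor C (1 : ℤ)).obj A),
      Triangle.mk f g h ∈ (distTriang C) ∧ le A ∧ ge ((shiftFunctor C (1 : ℤ)).obj B)

/-- `X ∈ C[m,n] = C^{t≤-m} ∩ C^{t≥-n}` where `C^{t≤-m} = C^{t≤0}[m]` and
`C^{t≥-n} = C^{t≥0}[n]`. -/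
def TStructure.interval (t : TStructure C) (m n : ℤ) (X : C) : Prop :=
  t.le ((shiftFunctor C (-m)).obj X) ∧ t.ge ((shiftFunctor C (-n)).obj X)

/-!
Take an `(m-1)`-weight decomposition `L → M → R → L[1]`; by adjacency `R ∈ C^{t≤-m}`. Truncate it
as `Q → R → I → Q[1]` with `Q ∈ C^{t≤-n-1} = C_{w≥n+1}` and `I ∈ C^{t≥-n}`; as an extension of `R`
and `Q[1]`, also `I ∈ C^{t≤-m}`. Completing `Q → R → L[1]` to a triangle `L → P → Q → L[1]` gives
an object `P` without weights `m,…,n` (this triangle is both an `n`- and an `(m-1)`-weight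
decomposition) together with a map `g : P → M` over `𝟙 L` and `Q → R`. Without the octahedral axiom
the cone of `g` need not be isomorphic to `I`, but a four-lemma chase shows that it is orthogonal to
the same objects, so it lies in `C[m,n]` as well.

For (b) and (c): a morphism killing weights `m,…,n` composes to zero with every map into `C[m,n]`,
because `C_{w≤m-1} ⊥ C_{w≥m} = C^{t≤-m}` and `C^{t≤-n-1} = C_{w≥n+1} ⊥ C^{t≥-n}`; and killing
weights is stable under composition on either side.
-/

section Shift

variable {D : Type*} [Category D] [HasShift D ℤ] {S : Set D}

lemma mem_shift_of_le (hS : ∀ ⦃X Y : D⦄, (X ≅ Y) → S X → S Y)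
    (h₁ : ∀ ⦃X : D⦄, S X → S (X⟦(1 : ℤ)⟧)) {X : D} {a b : ℤ} (hab : a ≤ b)
    (hX : S (X⟦a⟧)) : S (X⟦b⟧) := by
  induction b, hab using Int.leInduction with
  | base => exact hX
  | succ b _ ih => exact hS ((shiftFunctorAdd' D b 1 (b + 1) rfl).app X).symm (h₁ ih)

lemma mem_shift_of_ge (hS : ∀ ⦃X Y : D⦄, (X ≅ Y) → S X → S Y)
    (h₁ : ∀ ⦃X : D⦄, S X → S (X⟦(-1 : ℤ)⟧)) {X : D} {a b : ℤ} (hab : a ≤ b)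
    (hX : S (X⟦b⟧)) : S (X⟦a⟧) := by
  induction a, hab using Int.leInductionDown with
  | base => exact hX
  | pred a _ ih => exact hS ((shiftFunctorAdd' D a (-1) (a - 1) (by ring)).app X).symm (h₁ ih)

end Shift

section Triangles

lemma exists_distTriang_of_distTriang_shift {A M B : C} (a : ℤ) {f : A ⟶ M⟦a⟧}
    {g : M⟦a⟧ ⟶ B} {δ : B ⟶ A⟦(1 : ℤ)⟧} (hT : Triangle.mk f g δ ∈ distTriang C) :
    ∃ (f' : A⟦-a⟧ ⟶ M) (g' : M ⟶ B⟦-a⟧) (δ' : B⟦-a⟧ ⟶ A⟦-a⟧⟦(1 : ℤ)⟧),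
      Triangle.mk f' g' δ' ∈ distTriang C := by
  let T := (Triangle.mk f g δ)⟦-a⟧
  let e : T.obj₂ ≅ M := shiftShiftNeg M a
  exact ⟨_, _, _, isomorphic_distinguished _ (Triangle.shift_distinguished _ hT (-a)) _ <|
    Triangle.isoMk _ _ (Iso.refl _) e.symm (Iso.refl _)
      (show (T.mor₁ ≫ e.hom) ≫ e.inv = 𝟙 _ ≫ T.mor₁ by simp)
      (show (e.inv ≫ T.mor₂) ≫ 𝟙 _ = e.inv ≫ T.mor₂ by simp)
      (show T.mor₃ ≫ (𝟙 T.obj₁)⟦(1 : ℤ)⟧' = 𝟙 _ ≫ T.mor₃ by simp)⟩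

variable {T : Triangle C}

lemma Triangle.coyoneda_exact_shift₂ (hT : T ∈ distTriang C) {X : C}
    (f : X ⟶ T.obj₂⟦(1 : ℤ)⟧) (hf : f ≫ T.mor₂⟦(1 : ℤ)⟧' = 0) :
    ∃ g : X ⟶ T.obj₁⟦(1 : ℤ)⟧, f = g ≫ T.mor₁⟦(1 : ℤ)⟧' := by
  obtain ⟨g, hg⟩ := Triangle.coyoneda_exact₁ T.rotate (rot_of_distTriang T hT) f hf
  exact ⟨-g, hg.trans ((Preadditive.comp_neg g _).trans (Preadditive.neg_comp g _).symm)⟩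

lemma Triangle.yoneda_exact_shift₁ (hT : T ∈ distTriang C) {X : C}
    (f : T.obj₁⟦(1 : ℤ)⟧ ⟶ X) (hf : T.mor₃ ≫ f = 0) :
    ∃ g : T.obj₂⟦(1 : ℤ)⟧ ⟶ X, f = T.mor₁⟦(1 : ℤ)⟧' ≫ g := by
  obtain ⟨g, hg⟩ := Triangle.yoneda_exact₃ T.rotate (rot_of_distTriang T hT) f hf
  exact ⟨-g, hg.trans ((Preadditive.neg_comp _ g).trans (Preadditive.comp_neg _ g).symm)⟩

lemma Triangle.yoneda_exact_shift₂ (hT : T ∈ distTriang C) {X : C}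
    (f : T.obj₂⟦(1 : ℤ)⟧ ⟶ X) (hf : T.mor₁⟦(1 : ℤ)⟧' ≫ f = 0) :
    ∃ g : T.obj₃⟦(1 : ℤ)⟧ ⟶ X, f = T.mor₂⟦(1 : ℤ)⟧' ≫ g := by
  obtain ⟨g, hg⟩ := Triangle.yoneda_exact₃ T.rotate.rotate
    (rot_of_distTriang _ (rot_of_distTriang T hT)) f
    ((Preadditive.neg_comp _ f).trans (neg_eq_zero.2 hf))
  exact ⟨-g, hg.trans ((Preadditive.neg_comp _ g).trans (Preadditive.comp_neg _ g).symm)⟩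

lemma Triangle.forall_hom_to_obj₃_eq_zero_iff (hT : T ∈ distTriang C) (Y : C) :
    (∀ β : Y ⟶ T.obj₃, β = 0) ↔ (∀ x : Y ⟶ T.obj₂, ∃ y, x = y ≫ T.mor₁) ∧
      ∀ y : Y ⟶ T.obj₁⟦(1 : ℤ)⟧, y ≫ T.mor₁⟦(1 : ℤ)⟧' = 0 → y = 0 := by
  constructor
  · intro h
    refine ⟨fun x ↦ Triangle.coyoneda_exact₂ T hT x (h _), fun y hy ↦ ?_⟩
    obtain ⟨z, rfl⟩ := Triangle.coyoneda_exact₁ T hT y hy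
    rw [h z, zero_comp]
  · rintro ⟨h₁, h₂⟩ β
    obtain ⟨x, rfl⟩ := Triangle.coyoneda_exact₃ T hT β
      (h₂ _ (by rw [Category.assoc, comp_distTriang_mor_zero₃₁ T hT, comp_zero]))
    obtain ⟨y, rfl⟩ := h₁ x
    rw [Category.assoc, comp_distTriang_mor_zero₁₂ T hT, comp_zero]

lemma Triangle.forall_hom_from_obj₃_eq_zero_iff (hT : T ∈ distTriang C) (Z : C) :
    (∀ α : T.obj₃ ⟶ Z, α = 0) ↔ (∀ x : T.obj₂ ⟶ Z, T.mor₁ ≫ x = 0 → x = 0) ∧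
      ∀ y : T.obj₁⟦(1 : ℤ)⟧ ⟶ Z, ∃ z, y = T.mor₁⟦(1 : ℤ)⟧' ≫ z := by
  constructor
  · intro h
    refine ⟨fun x hx ↦ ?_, fun y ↦ Triangle.yoneda_exact_shift₁ hT y (h _)⟩
    obtain ⟨z, rfl⟩ := Triangle.yoneda_exact₂ T hT x hx
    rw [h z, comp_zero]
  · rintro ⟨h₁, h₂⟩ α
    obtain ⟨y, rfl⟩ := Triangle.yoneda_exact₃ T hT α
      (h₁ _ (by rw [← Category.assoc, comp_distTriang_mor_zero₁₂ T hT, zero_comp]))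
    obtain ⟨z, rfl⟩ := h₂ y
    rw [← Category.assoc, comp_distTriang_mor_zero₃₁ T hT, zero_comp]

variable {T' : Triangle C} (ψ : T ⟶ T') [IsIso ψ.hom₁]

lemma exists_lift_hom₂_of_isIso_hom₁ (hT : T ∈ distTriang C) (hT' : T' ∈ distTriang C)
    {Y : C} (h₃ : ∀ c : Y ⟶ T'.obj₃, ∃ d, c = d ≫ ψ.hom₃) (x : Y ⟶ T'.obj₂) :
    ∃ y, x = y ≫ ψ.hom₂ := by
  obtain ⟨d, hd⟩ := h₃ (x ≫ T'.mor₂)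
  obtain ⟨e, rfl⟩ := Triangle.coyoneda_exact₃ T hT d (by
    rw [← cancel_mono (ψ.hom₁⟦(1 : ℤ)⟧'), Category.assoc, ψ.comm₃, ← reassoc_of% hd,
      comp_distTriang_mor_zero₂₃ T' hT', comp_zero, zero_comp])
  obtain ⟨a, ha⟩ := Triangle.coyoneda_exact₂ T' hT' (x - e ≫ ψ.hom₂) (by
    rw [Preadditive.sub_comp, Category.assoc, ← ψ.comm₂, hd, Category.assoc, sub_self])
  refine ⟨e + (a ≫ inv ψ.hom₁) ≫ T.mor₁, ?_⟩
  rw [Preadditive.add_comp, Category.assoc, ψ.comm₁, Category.assoc, IsIso.inv_hom_id_assoc,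
    ← ha, add_sub_cancel]

lemma eq_zero_of_comp_shift_hom₂_of_isIso_hom₁ (hT : T ∈ distTriang C)
    (hT' : T' ∈ distTriang C) {Y : C} (h₃ : ∀ c : Y ⟶ T'.obj₃, ∃ d, c = d ≫ ψ.hom₃)
    (h₃' : ∀ c : Y ⟶ T.obj₃⟦(1 : ℤ)⟧, c ≫ ψ.hom₃⟦(1 : ℤ)⟧' = 0 → c = 0)
    (y : Y ⟶ T.obj₂⟦(1 : ℤ)⟧) (hy : y ≫ ψ.hom₂⟦(1 : ℤ)⟧' = 0) : y = 0 := by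
  obtain ⟨y₁, rfl⟩ := Triangle.coyoneda_exact_shift₂ hT y (h₃' _ (by
    rw [Category.assoc, ← Functor.map_comp, ψ.comm₂, Functor.map_comp, reassoc_of% hy,
      zero_comp]))
  obtain ⟨w, hw⟩ := Triangle.coyoneda_exact₁ T' hT' (y₁ ≫ ψ.hom₁⟦(1 : ℤ)⟧') (by
    rw [Category.assoc, ← Functor.map_comp, ← ψ.comm₁, Functor.map_comp, ← Category.assoc, hy])
  obtain ⟨d, rfl⟩ := h₃ w
  have hy₁ : y₁ = d ≫ T.mor₃ := by
    rw [← cancel_mono (ψ.hom₁⟦(1 : ℤ)⟧'), hw, Category.assoc, Category.assoc, ψ.comm₃]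
  rw [hy₁, Category.assoc, comp_distTriang_mor_zero₃₁ T hT, comp_zero]

lemma eq_zero_of_hom₂_comp_of_isIso_hom₁ (hT : T ∈ distTriang C) (hT' : T' ∈ distTriang C)
    {Z : C} (h₃ : ∀ c : T'.obj₃ ⟶ Z, ψ.hom₃ ≫ c = 0 → c = 0)
    (x : T'.obj₂ ⟶ Z) (hx : ψ.hom₂ ≫ x = 0) : x = 0 := by
  obtain ⟨ρ, rfl⟩ := Triangle.yoneda_exact₂ T' hT' x (by
    rw [← cancel_epi ψ.hom₁, ← Category.assoc, ← ψ.comm₁, Category.assoc, hx, comp_zero,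
      comp_zero])
  obtain ⟨σ, hσ⟩ := Triangle.yoneda_exact₃ T hT (ψ.hom₃ ≫ ρ) (by
    rw [← Category.assoc, ψ.comm₂, Category.assoc, hx])
  have hρ : ρ = T'.mor₃ ≫ inv (ψ.hom₁⟦(1 : ℤ)⟧') ≫ σ := by
    refine sub_eq_zero.1 (h₃ _ ?_)
    rw [Preadditive.comp_sub, hσ, ← Category.assoc ψ.hom₃, ← ψ.comm₃, Category.assoc,
      IsIso.hom_inv_id_assoc, sub_self]
  rw [hρ, ← Category.assoc, comp_distTriang_mor_zero₂₃ T' hT', zero_comp]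

lemma exists_desc_shift_hom₂_of_isIso_hom₁ (hT : T ∈ distTriang C) (hT' : T' ∈ distTriang C)
    {Z : C} (h₃ : ∀ c : T'.obj₃ ⟶ Z, ψ.hom₃ ≫ c = 0 → c = 0)
    (h₃' : ∀ c : T.obj₃⟦(1 : ℤ)⟧ ⟶ Z, ∃ d, c = ψ.hom₃⟦(1 : ℤ)⟧' ≫ d)
    (γ : T.obj₂⟦(1 : ℤ)⟧ ⟶ Z) : ∃ μ, γ = ψ.hom₂⟦(1 : ℤ)⟧' ≫ μ := by
  obtain ⟨μ, hμ⟩ := Triangle.yoneda_exact_shift₁ hT'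
    (inv (ψ.hom₁⟦(1 : ℤ)⟧') ≫ T.mor₁⟦(1 : ℤ)⟧' ≫ γ) (h₃ _ (by
      rw [← Category.assoc, ← ψ.comm₃, Category.assoc, IsIso.hom_inv_id_assoc, ← Category.assoc,
        comp_distTriang_mor_zero₃₁ T hT, zero_comp]))
  obtain ⟨τ, hτ⟩ := Triangle.yoneda_exact_shift₂ hT (γ - ψ.hom₂⟦(1 : ℤ)⟧' ≫ μ) (by
    rw [Preadditive.comp_sub, ← Category.assoc, ← Functor.map_comp, ψ.comm₁, Functor.map_comp,
      Category.assoc, ← hμ, IsIso.hom_inv_id_assoc, sub_self])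
  obtain ⟨d, rfl⟩ := h₃' τ
  refine ⟨μ + T'.mor₂⟦(1 : ℤ)⟧' ≫ d, ?_⟩
  rw [Preadditive.comp_add, ← Category.assoc, ← Functor.map_comp, ← ψ.comm₂, Functor.map_comp,
    Category.assoc, ← hτ, add_sub_cancel]

lemma forall_hom_to_cone_hom₂_eq_zero (hT : T ∈ distTriang C) (hT' : T' ∈ distTriang C)
    {E I : C} {u : T'.obj₂ ⟶ E} {v : E ⟶ T.obj₂⟦(1 : ℤ)⟧}
    (hE : Triangle.mk ψ.hom₂ u v ∈ distTriang C) {u' : T'.obj₃ ⟶ I}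
    {v' : I ⟶ T.obj₃⟦(1 : ℤ)⟧} (hI : Triangle.mk ψ.hom₃ u' v' ∈ distTriang C)
    {Y : C} (hY : ∀ f : Y ⟶ I, f = 0) : ∀ f : Y ⟶ E, f = 0 := by
  obtain ⟨h₃, h₃'⟩ := (Triangle.forall_hom_to_obj₃_eq_zero_iff hI Y).1 hY
  exact (Triangle.forall_hom_to_obj₃_eq_zero_iff hE Y).2
    ⟨exists_lift_hom₂_of_isIso_hom₁ ψ hT hT' h₃,
      eq_zero_of_comp_shift_hom₂_of_isIso_hom₁ ψ hT hT' h₃ h₃'⟩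

lemma forall_hom_from_cone_hom₂_eq_zero (hT : T ∈ distTriang C) (hT' : T' ∈ distTriang C)
    {E I : C} {u : T'.obj₂ ⟶ E} {v : E ⟶ T.obj₂⟦(1 : ℤ)⟧}
    (hE : Triangle.mk ψ.hom₂ u v ∈ distTriang C) {u' : T'.obj₃ ⟶ I}
    {v' : I ⟶ T.obj₃⟦(1 : ℤ)⟧} (hI : Triangle.mk ψ.hom₃ u' v' ∈ distTriang C)
    {Z : C} (hZ : ∀ f : I ⟶ Z, f = 0) : ∀ f : E ⟶ Z, f = 0 := by
  obtain ⟨h₃, h₃'⟩ := (Triangle.forall_hom_from_obj₃_eq_zero_iff hI Z).1 hZ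
  exact (Triangle.forall_hom_from_obj₃_eq_zero_iff hE Z).2
    ⟨eq_zero_of_hom₂_comp_of_isIso_hom₁ ψ hT hT' h₃,
      exists_desc_shift_hom₂_of_isIso_hom₁ ψ hT hT' h₃ h₃'⟩

end Triangles

namespace WeightStructure

variable (w : WeightStructure C)

lemma le_of_iso {X Y : C} (e : X ≅ Y) (h : w.le X) : w.le Y :=
  w.le_retract e.inv e.hom e.inv_hom_id h

lemma ge_of_iso {X Y : C} (e : X ≅ Y) (h : w.ge X) : w.ge Y :=
  w.ge_retract e.inv e.hom e.inv_hom_id h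

lemma exists_isWeightDecomp (k : ℤ) (M : C) :
    ∃ (A B : C) (f : A ⟶ M) (p : M ⟶ B) (δ : B ⟶ A⟦(1 : ℤ)⟧), w.IsWeightDecomp k f p δ := by
  obtain ⟨A, B, f, p, δ, hT, hA, hB⟩ := w.decomp (M⟦-k⟧)
  obtain ⟨f', p', δ', hT'⟩ := exists_distTriang_of_distTriang_shift (-k) hT
  exact ⟨_, _, f', p', δ', hT', w.le_of_iso (shiftNegShift A (-k)).symm hA,
    w.ge_of_iso ((shiftFunctorAdd' C (-(-k)) (-(k + 1)) (-1) (by ring)).app B) hB⟩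

variable {w} {m n : ℤ}

lemma leDeg_mono {X : C} {i j : ℤ} (h : w.leDeg i X) (hij : i ≤ j) : w.leDeg j X :=
  mem_shift_of_ge (fun _ _ ↦ w.le_of_iso) w.le_shift (neg_le_neg hij) h

lemma geDeg_anti {X : C} {i j : ℤ} (h : w.geDeg j X) (hij : i ≤ j) : w.geDeg i X :=
  mem_shift_of_le (fun _ _ ↦ w.ge_of_iso) w.ge_shift (neg_le_neg hij) h

lemma hom_eq_zero {X Y : C} {i j : ℤ} (hX : w.leDeg i X) (hY : w.geDeg j Y) (hij : i < j)
    (f : X ⟶ Y) : f = 0 := by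
  have hY' : w.geDeg (i + 1) Y := geDeg_anti hY hij
  let e : Y⟦-i⟧ ≅ Y⟦-(i + 1)⟧⟦(1 : ℤ)⟧ :=
    (shiftFunctorAdd' C (-(i + 1)) 1 (-i) (by ring)).app Y
  have h : f⟦-i⟧' ≫ e.hom = 0 := w.orth hX hY' _
  apply (shiftFunctor C (-i)).map_injective
  rw [Functor.map_zero, ← cancel_mono e.hom, h, zero_comp]

lemma IsWeightDecomp.exists_lift {k : ℤ} {A M B X : C} {f : A ⟶ M} {p : M ⟶ B}
    {δ : B ⟶ A⟦(1 : ℤ)⟧} (hD : w.IsWeightDecomp k f p δ) (hX : w.leDeg k X) (x : X ⟶ M) :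
    ∃ a, x = a ≫ f :=
  Triangle.coyoneda_exact₂ _ hD.1 x (hom_eq_zero hX hD.2.2 (lt_add_one k) _)

lemma IsWeightDecomp.exists_desc {k : ℤ} {A M B Y : C} {f : A ⟶ M} {p : M ⟶ B}
    {δ : B ⟶ A⟦(1 : ℤ)⟧} (hD : w.IsWeightDecomp k f p δ) (hY : w.geDeg (k + 1) Y)
    (y : M ⟶ Y) : ∃ b, y = p ≫ b :=
  Triangle.yoneda_exact₂ _ hD.1 y (hom_eq_zero hD.2.1 hY (lt_add_one k) _)

lemma KillsWeights.comp {X M N Y : C} {g : M ⟶ N} (hg : w.KillsWeights m n g) (k : X ⟶ M)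
    (l : N ⟶ Y) : w.KillsWeights m n (k ≫ g ≫ l) := by
  obtain ⟨A, B, A', B', f, p, δ, f', p', δ', hD, hD', hz⟩ := hg
  obtain ⟨A₁, B₁, f₁, p₁, δ₁, hD₁⟩ := w.exists_isWeightDecomp n X
  obtain ⟨A₂, B₂, f₂, p₂, δ₂, hD₂⟩ := w.exists_isWeightDecomp (m - 1) Y
  obtain ⟨a, ha⟩ := hD.exists_lift hD₁.2.1 (f₁ ≫ k)
  obtain ⟨b, hb⟩ := hD'.exists_desc hD₂.2.2 (l ≫ p₂)
  refine ⟨_, _, _, _, f₁, p₁, δ₁, f₂, p₂, δ₂, hD₁, hD₂, ?_⟩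
  calc f₁ ≫ (k ≫ g ≫ l) ≫ p₂ = a ≫ (f ≫ g ≫ p') ≫ b := by
        simp only [Category.assoc, reassoc_of% ha, hb]
    _ = 0 := by rw [hz, zero_comp, comp_zero]

lemma withoutWeights_of_distTriang {L P Q : C} {i : L ⟶ P} {p : P ⟶ Q}
    {φ : Q ⟶ L⟦(1 : ℤ)⟧} (hT : Triangle.mk i p φ ∈ distTriang C) (hL : w.leDeg (m - 1) L)
    (hQ : w.geDeg (n + 1) Q) (hmn : m ≤ n + 1) : w.WithoutWeights m n P :=
  ⟨L, Q, L, Q, i, p, φ, i, p, φ, ⟨hT, leDeg_mono hL (by omega), hQ⟩,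
    ⟨hT, hL, geDeg_anti hQ (by omega)⟩,
    by rw [Category.id_comp]; exact comp_distTriang_mor_zero₁₂ _ hT⟩

end WeightStructure

namespace TStructure

variable (t : TStructure C)

/-- `X ∈ C^{t≤k}`, as `C^{t≤k} = C^{t≤0}[-k]`; likewise `geDeg k X` is `X ∈ C^{t≥k}`. -/
def leDeg (k : ℤ) (X : C) : Prop := t.le (X⟦k⟧)

def geDeg (k : ℤ) (X : C) : Prop := t.ge (X⟦k⟧)

variable {t}

lemma leDeg_neg_iff_geDeg {w : WeightStructure C} (hadj : t.le = w.ge) {k : ℤ} {X : C} :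
    t.leDeg (-k) X ↔ w.geDeg k X := by
  rw [leDeg, hadj]; rfl

lemma leDeg_of_iso {X Y : C} {k : ℤ} (e : X ≅ Y) (h : t.leDeg k X) : t.leDeg k Y :=
  t.le_iso ((shiftFunctor C k).mapIso e) h

lemma geDeg_of_iso {X Y : C} {k : ℤ} (e : X ≅ Y) (h : t.geDeg k X) : t.geDeg k Y :=
  t.ge_iso ((shiftFunctor C k).mapIso e) h

lemma leDeg_mono {X : C} {i j : ℤ} (h : t.leDeg i X) (hij : i ≤ j) : t.leDeg j X :=
  mem_shift_of_le t.le_iso t.le_shift hij h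

lemma leDeg_shift {X : C} {k : ℤ} (h : t.leDeg k X) (a : ℤ) : t.leDeg (k - a) (X⟦a⟧) :=
  t.le_iso ((shiftFunctorAdd' C a (k - a) k (by ring)).app X) h

lemma hom_eq_zero {X Y : C} {i j : ℤ} (hX : t.leDeg i X) (hY : t.geDeg j Y) (hij : i < j)
    (f : X ⟶ Y) : f = 0 := by
  have hX' : t.leDeg (j - 1) X := leDeg_mono hX (by omega)
  let e : X⟦j - 1⟧⟦(1 : ℤ)⟧ ≅ X⟦j⟧ := ((shiftFunctorAdd' C (j - 1) 1 j (by ring)).app X).symm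
  have h : e.hom ≫ f⟦j⟧' = 0 := t.orth hX' hY _
  apply (shiftFunctor C j).map_injective
  rw [Functor.map_zero, ← cancel_epi e.hom, h, comp_zero]

variable (t) in
lemma exists_distTriang_leDeg_geDeg (k : ℤ) (M : C) :
    ∃ (A B : C) (f : A ⟶ M) (g : M ⟶ B) (δ : B ⟶ A⟦(1 : ℤ)⟧),
      Triangle.mk f g δ ∈ distTriang C ∧ t.leDeg k A ∧ t.geDeg (k + 1) B := by
  obtain ⟨A, B, f, g, δ, hT, hA, hB⟩ := t.decomp (M⟦k⟧)
  obtain ⟨f', g', δ', hT'⟩ := exists_distTriang_of_distTriang_shift k hT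
  exact ⟨_, _, f', g', δ', hT', t.le_iso (shiftNegShift A k).symm hA,
    t.ge_iso ((shiftFunctorAdd' C (-k) (k + 1) 1 (by ring)).app B) hB⟩

lemma leDeg_of_forall_hom_eq_zero {X : C} (k : ℤ)
    (H : ∀ Z, t.geDeg (k + 1) Z → ∀ f : X ⟶ Z, f = 0) : t.leDeg k X := by
  obtain ⟨A, B, f, g, δ, hT, hA, hB⟩ := t.exists_distTriang_leDeg_geDeg k X
  obtain ⟨r, hr⟩ : ∃ r : A⟦(1 : ℤ)⟧ ⟶ B, 𝟙 B = δ ≫ r :=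
    Triangle.yoneda_exact₃ _ hT (𝟙 B) (show g ≫ 𝟙 B = 0 by rw [H B hB g, zero_comp])
  have hB₀ : IsZero B := by
    rw [IsZero.iff_id_eq_zero, hr, hom_eq_zero (leDeg_shift hA 1) hB (by omega) r, comp_zero]
  have : IsIso f := (Triangle.isZero₃_iff_isIso₁ _ hT).1 hB₀
  exact leDeg_of_iso (asIso f) hA

lemma geDeg_of_forall_hom_eq_zero {X : C} (k : ℤ)
    (H : ∀ Y, t.leDeg (k - 1) Y → ∀ f : Y ⟶ X, f = 0) : t.geDeg k X := by
  obtain ⟨A, B, f, g, δ, hT, hA, hB⟩ := t.exists_distTriang_leDeg_geDeg (k - 1) X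
  obtain ⟨r, hr⟩ : ∃ r : A⟦(1 : ℤ)⟧ ⟶ B, 𝟙 _ = r ≫ δ :=
    Triangle.coyoneda_exact₁ _ hT (𝟙 _)
      (show 𝟙 _ ≫ f⟦(1 : ℤ)⟧' = 0 by rw [H A hA f, Functor.map_zero, comp_zero])
  have hA₀ : IsZero (A⟦(1 : ℤ)⟧) := by
    rw [IsZero.iff_id_eq_zero, hr, hom_eq_zero (leDeg_shift hA 1) hB (by omega) r, zero_comp]
  have : IsIso g := (Triangle.isZero₃_iff_isIso₁ _ (rot_of_distTriang _ hT)).1 hA₀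
  rw [sub_add_cancel] at hB
  exact geDeg_of_iso (asIso g).symm hB

end TStructure

lemma WeightStructure.KillsWeights.comp_eq_zero_of_interval {w : WeightStructure C}
    {t : TStructure C} (hadj : t.le = w.ge) {m n : ℤ} {N M I : C} {j : N ⟶ M}
    (hj : w.KillsWeights m n j) (hI : t.interval m n I) (h : M ⟶ I) : j ≫ h = 0 := by
  obtain ⟨A, B, A', B', f, p, δ, f', p', δ', hD, hD', hz⟩ := hj
  obtain ⟨c, hc⟩ : ∃ c : A ⟶ A', f ≫ j = c ≫ f' :=
    Triangle.coyoneda_exact₂ _ hD'.1 (f ≫ j) ((Category.assoc _ _ _).trans hz)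
  have hf'h : f' ≫ h = 0 :=
    hom_eq_zero hD'.2.1 ((TStructure.leDeg_neg_iff_geDeg hadj).1 hI.1) (by omega) _
  obtain ⟨d, hd⟩ : ∃ d : B ⟶ I, j ≫ h = p ≫ d := Triangle.yoneda_exact₂ _ hD.1 (j ≫ h)
    (show f ≫ j ≫ h = 0 by rw [← Category.assoc, hc, Category.assoc, hf'h, comp_zero])
  have hB : t.leDeg (-(n + 1)) B := (TStructure.leDeg_neg_iff_geDeg hadj).2 hD.2.2
  rw [hd, TStructure.hom_eq_zero hB hI.2 (by omega) d, comp_zero]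

theorem exists_distTriang_interval_withoutWeights {w : WeightStructure C} {t : TStructure C}
    (hadj : t.le = w.ge) {m n : ℤ} (hmn : m ≤ n + 1) (M : C) :
    ∃ (P I₀ : C) (g : P ⟶ M) (h : M ⟶ I₀) (δ : I₀ ⟶ P⟦(1 : ℤ)⟧),
      Triangle.mk g h δ ∈ distTriang C ∧ t.interval m n I₀ ∧ w.WithoutWeights m n P := by
  obtain ⟨L, R, f₁, p₁, δ₁, hT₁, hL, hR⟩ := w.exists_isWeightDecomp (m - 1) M
  obtain ⟨Q, I, f₂, q, δ₂, hT₂, hQ, hI⟩ := t.exists_distTriang_leDeg_geDeg (-n - 1) R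
  obtain ⟨P, i, p, hT₃⟩ := distinguished_cocone_triangle₂ (f₂ ≫ δ₁)
  have hcomm : (f₂ ≫ δ₁) ≫ (𝟙 L)⟦(1 : ℤ)⟧' = f₂ ≫ δ₁ := by simp
  obtain ⟨g, hg₁, hg₂⟩ : ∃ g : P ⟶ M, i ≫ g = 𝟙 L ≫ f₁ ∧ p ≫ f₂ = g ≫ p₁ :=
    complete_distinguished_triangle_morphism₂ _ _ hT₃ hT₁ (𝟙 L) f₂ hcomm
  let ψ : Triangle.mk i p (f₂ ≫ δ₁) ⟶ Triangle.mk f₁ p₁ δ₁ :=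
    Triangle.homMk _ _ (𝟙 L) g f₂ hg₁ hg₂ hcomm
  have : IsIso ψ.hom₁ := inferInstanceAs (IsIso (𝟙 L))
  obtain ⟨E, u, v, hE⟩ := distinguished_cocone_triangle g
  have hR' : t.leDeg (-m) R :=
    TStructure.leDeg_mono ((TStructure.leDeg_neg_iff_geDeg hadj).2 hR) (by omega)
  have hQ' : w.geDeg (n + 1) Q :=
    (TStructure.leDeg_neg_iff_geDeg hadj).1 (TStructure.leDeg_mono hQ (by omega))
  refine ⟨P, E, g, u, v, hE, ⟨?_, ?_⟩,
    WeightStructure.withoutWeights_of_distTriang hT₃ hL hQ' hmn⟩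
  · refine TStructure.leDeg_of_forall_hom_eq_zero (-m) fun Z hZ ↦
      forall_hom_from_cone_hom₂_eq_zero ψ hT₃ hT₁ hE hT₂ fun c ↦ ?_
    obtain ⟨d, rfl⟩ : ∃ d : Q⟦(1 : ℤ)⟧ ⟶ Z, c = δ₂ ≫ d := Triangle.yoneda_exact₂ _
      (rot_of_distTriang _ hT₂) c (TStructure.hom_eq_zero hR' hZ (by omega) _)
    rw [TStructure.hom_eq_zero (TStructure.leDeg_shift hQ 1) hZ (by omega) d, comp_zero]
  · exact TStructure.geDeg_of_forall_hom_eq_zero (-n) fun Y hY ↦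
      forall_hom_to_cone_hom₂_eq_zero ψ hT₃ hT₁ hE hT₂ fun c ↦
        TStructure.hom_eq_zero hY hI (by omega) c

/-- Remark 2.2.2(2-3): if `t` is a `t`-structure adjacent to `w` (`C^{t≤0} = C_{w≥0}`), then
every `M` fits in a distinguished triangle `P → M → I₀ → P[1]` with `I₀ ∈ C[m,n]` and `P`
without weights `m,…,n`; for any such triangle, a morphism `j` with target `M` kills weights
`m,…,n` iff it factors through `g : P ⟶ M`, and every morphism from `M` to an object of
`C[m,n]` factors through `h : M ⟶ I₀`. -/
theorem adjacent_tStructure_homOrthogonal (w : WeightStructure C) (t : TStructure C)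
    (hadj : t.le = w.ge) (m n : ℤ) (hmn : m ≤ n) :
    (∀ M : C, ∃ (P I₀ : C) (g : P ⟶ M) (h : M ⟶ I₀)
        (δ : I₀ ⟶ (shiftFunctor C (1 : ℤ)).obj P),
      Triangle.mk g h δ ∈ (distTriang C) ∧ t.interval m n I₀ ∧ w.WithoutWeights m n P) ∧
    (∀ (M P I₀ : C) (g : P ⟶ M) (h : M ⟶ I₀) (δ : I₀ ⟶ (shiftFunctor C (1 : ℤ)).obj P),
      Triangle.mk g h δ ∈ (distTriang C) → t.interval m n I₀ → w.WithoutWeights m n P →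
      ((∀ (N : C) (j : N ⟶ M), w.KillsWeights m n j ↔ ∃ k : N ⟶ P, k ≫ g = j) ∧
       (∀ (Z : C) (φ : M ⟶ Z), t.interval m n Z → ∃ ψ : I₀ ⟶ Z, h ≫ ψ = φ))) := by
  refine ⟨exists_distTriang_interval_withoutWeights hadj (by omega), ?_⟩
  intro M P I₀ g h δ hT hI hP
  refine ⟨fun N j ↦ ⟨fun hj ↦ ?_, ?_⟩, fun Z φ hZ ↦ ?_⟩
  · obtain ⟨k, hk⟩ := Triangle.coyoneda_exact₂ _ hT j (hj.comp_eq_zero_of_interval hadj hI h)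
    exact ⟨k, hk.symm⟩
  · rintro ⟨k, rfl⟩
    simpa using hP.comp k g
  · obtain ⟨ψ, hψ⟩ := Triangle.yoneda_exact₂ _ hT φ
      (show g ≫ φ = 0 by simpa using hP.comp_eq_zero_of_interval hadj hZ (g ≫ φ))
    exact ⟨ψ, hψ.symm⟩
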